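/- Let φ, φ̃ : [a₁,a₂] → ℝ be C¹ with φ, φ̃ ≥ β²/H for some β > 0 (equivalently q² ≥ β², h ≤ H), satisfying φ′ = −g·ζ′·q²/φ − p and φ̃′ = −g·ζ̃′·q̃²/φ̃ − p̃ pointwise, where ζ, ζ̃ ∈ W^{1,∞}, q, q̃, p, p̃ ∈ L¹ ∩ L^∞ appropriately bounded. Then for all x ∈ [a₁,a₂]: |φ(x) − φ̃(x)| ≤ E + C₂ ∫_{a₁}^{x} |φ − φ̃| dy, where C₂ = (g/β²)‖ζ′‖_∞‖h·h̃‖_∞ with h = q²/φ, h̃ = q̃²/φ̃, and E = |φ(a₁) − φ̃(a₁)| + C₃‖q − q̃‖_{L¹} + C₄‖ζ′ − ζ̃′‖_{L¹} + ‖p − p̃‖_{L¹}, with C₃ = (g/β²)‖h̃‖_∞‖ζ̃′(q + q̃)‖_∞ and C₄ = (g/β²)‖h̃‖_∞‖q²‖_∞. -/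

import Mathlib

/-! The difference `ψ = φ - φ̃` has derivative
`g ζ' q²/(φ φ̃) ψ - (g/φ̃)(ζ' - ζ̃') q² - (g/φ̃) ζ̃'(q + q̃)(q - q̃) - (p - p̃)`.
Since `q²/(φ φ̃) = h h̃ / q̃²` and `1/φ̃ = h̃ / q̃²` with `q̃² ≥ β²`, this gives
`|ψ'| ≤ C₂ |ψ| + C₃ |q - q̃| + C₄ |ζ' - ζ̃'| + |p - p̃|`, and integrating from `a₁` yields the
estimate. -/

open Set Real MeasureTheory

lemma abs_div_sq_le_of_le {x y K β : ℝ} (hx : |x| ≤ K) (hβ : 0 < β) (hy : β ≤ |y|) :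
    |x / y ^ 2| ≤ K / β ^ 2 := by
  rw [abs_div, abs_of_nonneg (sq_nonneg y)]
  exact div_le_div₀ ((abs_nonneg x).trans hx) hx (by positivity)
    (sq_abs y ▸ pow_le_pow_left₀ hβ.le hy 2)

lemma abs_ode_rhs_sub_le {g β Kz Khh Kh Kzq Kq2 dζ dζt q qt φ φt p pt : ℝ}
    (hg : 0 < g) (hβ : 0 < β) (hqt : β ≤ |qt|) (hφ : 0 < φ) (hφt : 0 < φt)
    (hKz : |dζ| ≤ Kz) (hKhh : |q ^ 2 / φ * (qt ^ 2 / φt)| ≤ Khh) (hKh : |qt ^ 2 / φt| ≤ Kh)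
    (hKzq : |dζt * (q + qt)| ≤ Kzq) (hKq2 : q ^ 2 ≤ Kq2) :
    |(-g * dζ * q ^ 2 / φ - p) - (-g * dζt * qt ^ 2 / φt - pt)| ≤
      g / β ^ 2 * Kz * Khh * |φ - φt|
        + (g / β ^ 2 * Kh * Kzq * |q - qt| + g / β ^ 2 * Kh * Kq2 * |dζ - dζt| + |p - pt|) := by
  have hqt₀ : qt ≠ 0 := abs_pos.mp (hβ.trans_le hqt)
  have hprod : |q ^ 2 / (φ * φt)| ≤ Khh / β ^ 2 := by
    convert abs_div_sq_le_of_le hKhh hβ hqt using 2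
    field_simp
  have hinv : |1 / φt| ≤ Kh / β ^ 2 := by
    convert abs_div_sq_le_of_le hKh hβ hqt using 2
    field_simp
  have hKz₀ : 0 ≤ Kz := (abs_nonneg _).trans hKz
  have hinv₀ : 0 ≤ Kh / β ^ 2 := (abs_nonneg _).trans hinv
  have hsplit : (-g * dζ * q ^ 2 / φ - p) - (-g * dζt * qt ^ 2 / φt - pt)
      = g * dζ * (q ^ 2 / (φ * φt)) * (φ - φt) - g * (1 / φt) * (dζ - dζt) * q ^ 2
        - g * (1 / φt) * (dζt * (q + qt)) * (q - qt) - (p - pt) := by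
    field_simp
    ring
  have h₁ : |g * dζ * (q ^ 2 / (φ * φt)) * (φ - φt)| ≤ g / β ^ 2 * Kz * Khh * |φ - φt| := by
    calc _ = g * |dζ| * |q ^ 2 / (φ * φt)| * |φ - φt| := by simp [abs_mul, abs_of_pos hg]
      _ ≤ g * Kz * (Khh / β ^ 2) * |φ - φt| := by gcongr
      _ = _ := by ring
  have h₂ : |g * (1 / φt) * (dζ - dζt) * q ^ 2| ≤ g / β ^ 2 * Kh * Kq2 * |dζ - dζt| := by
    calc _ = g * |1 / φt| * |dζ - dζt| * q ^ 2 := by simp [abs_mul, abs_of_pos hg]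
      _ ≤ g * (Kh / β ^ 2) * |dζ - dζt| * Kq2 := by gcongr
      _ = _ := by ring
  have h₃ : |g * (1 / φt) * (dζt * (q + qt)) * (q - qt)| ≤ g / β ^ 2 * Kh * Kzq * |q - qt| := by
    calc _ = g * |1 / φt| * |dζt * (q + qt)| * |q - qt| := by simp [abs_mul, abs_of_pos hg]
      _ ≤ g * (Kh / β ^ 2) * Kzq * |q - qt| := by gcongr
      _ = _ := by ring
  rw [hsplit]
  calc _ ≤ |g * dζ * (q ^ 2 / (φ * φt)) * (φ - φt)| + |g * (1 / φt) * (dζ - dζt) * q ^ 2|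
        + |g * (1 / φt) * (dζt * (q + qt)) * (q - qt)| + |p - pt| :=
        (abs_sub _ _).trans (by gcongr; exact (abs_sub _ _).trans (by gcongr; exact abs_sub _ _))
    _ ≤ _ := by linarith

lemma abs_le_add_integral_of_abs_deriv_le {f f' E : ℝ → ℝ} {C a b x : ℝ} (hx : x ∈ Icc a b)
    (hf : ∀ y ∈ Icc a b, HasDerivAt f (f' y) y) (hEc : ContinuousOn E (Icc a b))
    (hE0 : ∀ y ∈ Icc a b, 0 ≤ E y) (hf' : ∀ y ∈ Icc a b, |f' y| ≤ C * |f y| + E y) :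
    |f x| ≤ |f a| + (∫ y in a..b, E y) + C * ∫ y in a..x, |f y| := by
  have hsub : Icc a x ⊆ Icc a b := Icc_subset_Icc_right hx.2
  have hint : ∀ u : ℝ → ℝ, ContinuousOn u (Icc a b) →
      ∀ c ∈ Icc a b, IntervalIntegrable u volume a c :=
    fun u hu c hc => (hu.mono (Icc_subset_Icc_right hc.2)).intervalIntegrable_of_Icc hc.1
  have hfc : ContinuousOn f (Icc a b) := fun y hy => (hf y hy).continuousAt.continuousWithinAt
  have hFTC : |f x - f a| ≤ ∫ y in a..x, (C * |f y| + E y) := by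
    refine norm_sub_le_integral_of_norm_deriv_le_of_le hx.1 (hfc.mono hsub)
      (fun y hy => (hf y (hsub (Ioo_subset_Icc_self hy))).differentiableAt.differentiableWithinAt)
      (ae_of_all _ fun y hy => ?_) (hint _ (by fun_prop) x hx)
    rw [(hf y (hsub (Ioo_subset_Icc_self hy))).deriv, Real.norm_eq_abs]
    exact hf' y (hsub (Ioo_subset_Icc_self hy))
  have hsplit : ∫ y in a..x, (C * |f y| + E y) = C * (∫ y in a..x, |f y|) + ∫ y in a..x, E y := by
    rw [intervalIntegral.integral_add ((hint _ (by fun_prop) x hx).const_mul C) (hint _ hEc x hx),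
      intervalIntegral.integral_const_mul]
  have hEmono : ∫ y in a..x, E y ≤ ∫ y in a..b, E y :=
    intervalIntegral.integral_mono_interval le_rfl hx.1 hx.2
      (ae_restrict_of_forall_mem measurableSet_Ioc fun y hy => hE0 y (Ioc_subset_Icc_self hy))
      (hint _ hEc b ⟨hx.1.trans hx.2, le_rfl⟩)
  linarith [abs_sub_abs_le_abs_sub (f x) (f a)]

theorem stmt9_general (g β a₁ a₂ Kz Khh Kh Kzq Kq2 : ℝ)
    (φ φt q qt p pt dζ dζt : ℝ → ℝ)
    (hg : 0 < g) (hβ : 0 < β)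
    (hqt : ∀ x ∈ Set.Icc a₁ a₂, β ≤ |qt x|)
    (hφpos : ∀ x ∈ Set.Icc a₁ a₂, 0 < φ x)
    (hφtpos : ∀ x ∈ Set.Icc a₁ a₂, 0 < φt x)
    (hKz : ∀ x ∈ Set.Icc a₁ a₂, |dζ x| ≤ Kz)
    (hKhh : ∀ x ∈ Set.Icc a₁ a₂, |((q x) ^ 2 / φ x) * ((qt x) ^ 2 / φt x)| ≤ Khh)
    (hKh : ∀ x ∈ Set.Icc a₁ a₂, |(qt x) ^ 2 / φt x| ≤ Kh)
    (hKzq : ∀ x ∈ Set.Icc a₁ a₂, |dζt x * (q x + qt x)| ≤ Kzq)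
    (hKq2 : ∀ x ∈ Set.Icc a₁ a₂, (q x) ^ 2 ≤ Kq2)
    (hqc : ContinuousOn q (Set.Icc a₁ a₂)) (hqtc : ContinuousOn qt (Set.Icc a₁ a₂))
    (hdζc : ContinuousOn dζ (Set.Icc a₁ a₂)) (hdζtc : ContinuousOn dζt (Set.Icc a₁ a₂))
    (hpc : ContinuousOn p (Set.Icc a₁ a₂)) (hptc : ContinuousOn pt (Set.Icc a₁ a₂))
    (hode : ∀ x ∈ Set.Icc a₁ a₂,
      HasDerivAt φ (-g * dζ x * (q x) ^ 2 / φ x - p x) x)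
    (hodet : ∀ x ∈ Set.Icc a₁ a₂,
      HasDerivAt φt (-g * dζt x * (qt x) ^ 2 / φt x - pt x) x) :
    ∀ x ∈ Set.Icc a₁ a₂,
      |φ x - φt x| ≤
        (|φ a₁ - φt a₁|
          + (g / β ^ 2 * Kh * Kzq) * (∫ y in a₁..a₂, |q y - qt y|)
          + (g / β ^ 2 * Kh * Kq2) * (∫ y in a₁..a₂, |dζ y - dζt y|)
          + (∫ y in a₁..a₂, |p y - pt y|))
        + (g / β ^ 2 * Kz * Khh) * ∫ y in a₁..x, |φ y - φt y| := by
  intro x hx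
  have ha₁ : a₁ ∈ Icc a₁ a₂ := ⟨le_rfl, hx.1.trans hx.2⟩
  set C₃ := g / β ^ 2 * Kh * Kzq
  set C₄ := g / β ^ 2 * Kh * Kq2
  have hKh₀ : 0 ≤ Kh := (abs_nonneg _).trans (hKh a₁ ha₁)
  have hC₃ : 0 ≤ C₃ := by have := (abs_nonneg _).trans (hKzq a₁ ha₁); positivity
  have hC₄ : 0 ≤ C₄ := by have := (sq_nonneg _).trans (hKq2 a₁ ha₁); positivity
  have hint : ∀ u : ℝ → ℝ, ContinuousOn u (Icc a₁ a₂) → IntervalIntegrable u volume a₁ a₂ :=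
    fun u hu => hu.intervalIntegrable_of_Icc ha₁.2
  have hE : ∫ y in a₁..a₂, (C₃ * |q y - qt y| + C₄ * |dζ y - dζt y| + |p y - pt y|)
      = C₃ * (∫ y in a₁..a₂, |q y - qt y|) + C₄ * (∫ y in a₁..a₂, |dζ y - dζt y|)
        + ∫ y in a₁..a₂, |p y - pt y| := by
    rw [intervalIntegral.integral_add, intervalIntegral.integral_add,
      intervalIntegral.integral_const_mul, intervalIntegral.integral_const_mul]
    all_goals exact hint _ (by fun_prop)
  have hbound := abs_le_add_integral_of_abs_deriv_le (f := fun y => φ y - φt y)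
    (E := fun y => C₃ * |q y - qt y| + C₄ * |dζ y - dζt y| + |p y - pt y|)
    (C := g / β ^ 2 * Kz * Khh) hx (fun y hy => (hode y hy).sub (hodet y hy)) (by fun_prop)
    (fun y _ => by positivity) fun y hy => abs_ode_rhs_sub_le hg hβ (hqt y hy) (hφpos y hy)
      (hφtpos y hy) (hKz y hy) (hKhh y hy) (hKh y hy) (hKzq y hy) (hKq2 y hy)
  linarith

/-- Stability: integral inequality for the difference of solutions of the
inverse ODE, preceding the Grönwall step (Proposition 3.8). -/
theorem stmt9 (g β a₁ a₂ Kz Khh Kh Kzq Kq2 : ℝ)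
    (φ φt q qt p pt dζ dζt : ℝ → ℝ)
    (hg : 0 < g) (hβ : 0 < β) (hab : a₁ < a₂)
    (hq : ∀ x ∈ Set.Icc a₁ a₂, β ≤ |q x|)
    (hqt : ∀ x ∈ Set.Icc a₁ a₂, β ≤ |qt x|)
    (hφpos : ∀ x ∈ Set.Icc a₁ a₂, 0 < φ x)
    (hφtpos : ∀ x ∈ Set.Icc a₁ a₂, 0 < φt x)
    (hKz : ∀ x ∈ Set.Icc a₁ a₂, |dζ x| ≤ Kz)
    (hKhh : ∀ x ∈ Set.Icc a₁ a₂, |((q x) ^ 2 / φ x) * ((qt x) ^ 2 / φt x)| ≤ Khh)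
    (hKh : ∀ x ∈ Set.Icc a₁ a₂, |(qt x) ^ 2 / φt x| ≤ Kh)
    (hKzq : ∀ x ∈ Set.Icc a₁ a₂, |dζt x * (q x + qt x)| ≤ Kzq)
    (hKq2 : ∀ x ∈ Set.Icc a₁ a₂, (q x) ^ 2 ≤ Kq2)
    (hqc : ContinuousOn q (Set.Icc a₁ a₂)) (hqtc : ContinuousOn qt (Set.Icc a₁ a₂))
    (hdζc : ContinuousOn dζ (Set.Icc a₁ a₂)) (hdζtc : ContinuousOn dζt (Set.Icc a₁ a₂))
    (hpc : ContinuousOn p (Set.Icc a₁ a₂)) (hptc : ContinuousOn pt (Set.Icc a₁ a₂))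
    (hode : ∀ x ∈ Set.Icc a₁ a₂,
      HasDerivAt φ (-g * dζ x * (q x) ^ 2 / φ x - p x) x)
    (hodet : ∀ x ∈ Set.Icc a₁ a₂,
      HasDerivAt φt (-g * dζt x * (qt x) ^ 2 / φt x - pt x) x) :
    ∀ x ∈ Set.Icc a₁ a₂,
      |φ x - φt x| ≤
        (|φ a₁ - φt a₁|
          + (g / β ^ 2 * Kh * Kzq) * (∫ y in a₁..a₂, |q y - qt y|)
          + (g / β ^ 2 * Kh * Kq2) * (∫ y in a₁..a₂, |dζ y - dζt y|)
          + (∫ y in a₁..a₂, |p y - pt y|))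
        + (g / β ^ 2 * Kz * Khh) * ∫ y in a₁..x, |φ y - φt y| :=
  stmt9_general g β a₁ a₂ Kz Khh Kh Kzq Kq2 φ φt q qt p pt dζ dζt hg hβ hqt hφpos hφtpos hKz hKhh
    hKh hKzq hKq2 hqc hqtc hdζc hdζtc hpc hptc hode hodet
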